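/- arXiv:1411.2451 — 2 statements merged into one kernel-verified Lean document; each statement's English description precedes it below -/
import Mathlib

section
/- Let D ≥ 2, k ≥ 1, and ε > 0. Then there exists δ > 0 depending on ε, k, D such that the following holds: if y_1,...,y_k and z_1,...,z_k are two k-point configurations in ℝ^D satisfying (1+δ)^{-1} ≤ |z_i − z_j|/|y_i − y_j| ≤ 1+δ for all i ≠ j, then there exists a Euclidean motion Φ_0 : x ↦ Tx + x_0 such that |z_i − Φ_0(y_i)| ≤ ε · diam{y_1,...,y_k} for each i = 1,...,k. If k ≤ D, then Φ_0 can be taken to be a proper Euclidean motion. -/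
/-!
Approximate alignment follows from exact rigidity by compactness. Two congruent finite
configurations in a finite-dimensional Euclidean space have equal Gram matrices after translating a
common point to the origin, so the isometry between their linear spans extends to a Euclidean
motion; when there are at most `dim E` points they span a proper affine subspace, and composing
with a reflection in a hyperplane containing it makes the motion proper. Translating and rescaling
to diameter `1` puts the configurations in a compact set, where a limit of configurations whose
distance ratios tend to `1` is congruent, hence exactly aligned, and an exact alignment becomes an
alignment up to `ε` under perturbations of size `ε / 2`.
-/

open Metric Module Filter Topology Set

section Metric

variable {P : Type*} {ι : Type*}

/-- The ratio condition `c⁻¹ ≤ dist (z i) (z j) / dist (y i) (y j) ≤ c`, multiplied out so that it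
is meaningful when points coincide. -/
def AlmostCongruent [PseudoMetricSpace P] (c : ℝ) (y z : ι → P) : Prop :=
  ∀ i j, dist (z i) (z j) ≤ c * dist (y i) (y j) ∧ dist (y i) (y j) ≤ c * dist (z i) (z j)

theorem AlmostCongruent.congruent [PseudoMetricSpace P] {y z : ι → P}
    (h : AlmostCongruent 1 y z) : Congruent y z :=
  congruent_iff_dist_eq.2 fun i j =>
    le_antisymm (by simpa using (h i j).2) (by simpa using (h i j).1)

theorem AlmostCongruent.mono [PseudoMetricSpace P] {c c' : ℝ} {y z : ι → P}
    (h : AlmostCongruent c y z) (hc : c ≤ c') : AlmostCongruent c' y z := fun i j =>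
  ⟨(h i j).1.trans (mul_le_mul_of_nonneg_right hc dist_nonneg),
    (h i j).2.trans (mul_le_mul_of_nonneg_right hc dist_nonneg)⟩

theorem almostCongruent_of_tendsto [PseudoMetricSpace P] {α : Type*} {l : Filter α} [l.NeBot]
    {c : α → ℝ} {y z : α → ι → P} {c₀ : ℝ} {y₀ z₀ : ι → P} (hc : Tendsto c l (𝓝 c₀))
    (hy : Tendsto y l (𝓝 y₀)) (hz : Tendsto z l (𝓝 z₀))
    (h : ∀ a, AlmostCongruent (c a) (y a) (z a)) : AlmostCongruent c₀ y₀ z₀ := fun i j => by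
  have hdy := (tendsto_pi_nhds.1 hy i).dist (tendsto_pi_nhds.1 hy j)
  have hdz := (tendsto_pi_nhds.1 hz i).dist (tendsto_pi_nhds.1 hz j)
  exact ⟨le_of_tendsto_of_tendsto' hdz (hc.mul hdy) fun a => (h a i j).1,
    le_of_tendsto_of_tendsto' hdy (hc.mul hdz) fun a => (h a i j).2⟩

theorem almostCongruent_of_dist_div [MetricSpace P] {c : ℝ} (hc : 0 < c) {y z : ι → P}
    (hy : Function.Injective y)
    (h : ∀ i j, i ≠ j → c⁻¹ ≤ dist (z i) (z j) / dist (y i) (y j) ∧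
      dist (z i) (z j) / dist (y i) (y j) ≤ c) :
    AlmostCongruent c y z := fun i j => by
  rcases eq_or_ne i j with rfl | hij
  · simp
  have hyij : 0 < dist (y i) (y j) := dist_pos.2 (hy.ne hij)
  obtain ⟨hlow, hup⟩ := h i j hij
  rw [le_div_iff₀ hyij, inv_mul_le_iff₀ hc] at hlow
  exact ⟨(div_le_iff₀ hyij).1 hup, hlow⟩

theorem AlmostCongruent.smul_sub {F : Type*} [NormedAddCommGroup F] [NormedSpace ℝ F] {c : ℝ}
    {y z : ι → F} (h : AlmostCongruent c y z) (a : ℝ) (p q : F) :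
    AlmostCongruent c (fun i => a • (y i - p)) (fun i => a • (z i - q)) := fun i j => by
  simp only [dist_smul₀, dist_sub_right, mul_left_comm c]
  exact ⟨mul_le_mul_of_nonneg_left (h i j).1 (norm_nonneg a),
    mul_le_mul_of_nonneg_left (h i j).2 (norm_nonneg a)⟩

end Metric

section InnerProductSpace

variable {E : Type*} [NormedAddCommGroup E] [InnerProductSpace ℝ E] {ι : Type*} [Fintype ι]

def AlignedWithin (r : ℝ) (y z : ι → E) : Prop :=
  ∃ (L : E ≃ₗᵢ[ℝ] E) (x₀ : E),
    (Fintype.card ι ≤ finrank ℝ E → LinearMap.det L.toLinearMap = 1) ∧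
      ∀ i, dist (z i) (L (y i) + x₀) ≤ r

theorem AlignedWithin.of_dist_le {r s : ℝ} {y z y' z' : ι → E} (h : AlignedWithin r y z)
    (hy : ∀ i, dist (y' i) (y i) ≤ s) (hz : ∀ i, dist (z' i) (z i) ≤ s) :
    AlignedWithin (s + r + s) y' z' := by
  obtain ⟨L, x₀, hdet, hL⟩ := h
  refine ⟨L, x₀, hdet, fun i => ?_⟩
  calc dist (z' i) (L (y' i) + x₀)
      ≤ dist (z' i) (z i) + dist (z i) (L (y i) + x₀) + dist (L (y i) + x₀) (L (y' i) + x₀) :=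
        dist_triangle4 _ _ _ _
    _ ≤ s + r + s := by
        rw [dist_add_right, L.dist_map, dist_comm (y i)]
        exact add_le_add_three (hz i) (hL i) (hy i)

theorem AlignedWithin.of_smul_sub {r a : ℝ} (ha : 0 < a) {y z : ι → E} {p q : E}
    (h : AlignedWithin r (fun i => a • (y i - p)) (fun i => a • (z i - q))) :
    AlignedWithin (a⁻¹ * r) y z := by
  obtain ⟨L, x₀, hdet, hL⟩ := h
  refine ⟨L, q - L p + a⁻¹ • x₀, hdet, fun i => ?_⟩
  have hrescale : z i - (L (y i) + (q - L p + a⁻¹ • x₀)) =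
      a⁻¹ • (a • (z i - q) - (L (a • (y i - p)) + x₀)) := by
    simp only [map_smul, map_sub, smul_sub, smul_add, inv_smul_smul₀ ha.ne']
    abel
  rw [dist_eq_norm, hrescale, norm_smul, Real.norm_of_nonneg (inv_nonneg.2 ha.le),
    ← dist_eq_norm]
  exact mul_le_mul_of_nonneg_left (hL i) (inv_nonneg.2 ha.le)

variable [FiniteDimensional ℝ E]

theorem exists_linearIsometryEquiv_of_inner_eq {u v : ι → E}
    (h : ∀ i j, inner ℝ (u i) (u j) = inner ℝ (v i) (v j)) :
    ∃ L : E ≃ₗᵢ[ℝ] E, ∀ i, L (u i) = v i := by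
  classical
  set U := Fintype.linearCombination ℝ u
  set V := Fintype.linearCombination ℝ v
  have hnorm (c : ι → ℝ) : ‖V c‖ = ‖U c‖ := by
    have hinner : inner ℝ (V c) (V c) = inner ℝ (U c) (U c) := by
      simp only [U, V, Fintype.linearCombination_apply, sum_inner, inner_sum,
        real_inner_smul_left, real_inner_smul_right, h]
    rwa [real_inner_self_eq_norm_sq, real_inner_self_eq_norm_sq,
      sq_eq_sq₀ (norm_nonneg _) (norm_nonneg _)] at hinner
  have hker : LinearMap.ker U ≤ LinearMap.ker V := fun c hc => by
    rw [LinearMap.mem_ker, ← norm_eq_zero, hnorm, norm_eq_zero, ← LinearMap.mem_ker]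
    exact hc
  set f : LinearMap.range U →ₗ[ℝ] E := (LinearMap.ker U).liftQ V hker ∘ₗ U.quotKerEquivRange.symm
  have hf (c : ι → ℝ) : f ⟨U c, LinearMap.mem_range_self U c⟩ = V c := by
    simp [f, LinearMap.quotKerEquivRange_symm_apply_image]
  let F : LinearMap.range U →ₗᵢ[ℝ] E :=
    { toLinearMap := f
      norm_map' := by
        rintro ⟨_, c, rfl⟩
        exact (hf c).symm ▸ hnorm c }
  refine ⟨F.extend.toLinearIsometryEquiv rfl, fun i => ?_⟩
  have hU : U (Pi.single i 1) = u i := by simp [U]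
  have hV : V (Pi.single i 1) = v i := by simp [V]
  rw [LinearIsometry.toLinearIsometryEquiv_apply, ← hU, ← hV, ← hf]
  exact F.extend_apply ⟨U (Pi.single i 1), LinearMap.mem_range_self U _⟩

theorem LinearIsometryEquiv.det_eq_one_or_neg_one (L : E ≃ₗᵢ[ℝ] E) :
    LinearMap.det L.toLinearMap = 1 ∨ LinearMap.det L.toLinearMap = -1 := by
  have hT := Matrix.det_of_mem_unitary <|
    L.toMatrix_mem_unitaryGroup (stdOrthonormalBasis ℝ E) (stdOrthonormalBasis ℝ E)
  rw [LinearMap.det_toMatrix] at hT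
  rw [← mul_self_eq_one_iff]
  exact Unitary.star_mul_self_of_mem hT

theorem Submodule.exists_linearIsometryEquiv_det_eq_neg_one {S : Submodule ℝ E} (hS : S ≠ ⊤) :
    ∃ R : E ≃ₗᵢ[ℝ] E, LinearMap.det R.toLinearMap = -1 ∧ ∀ x ∈ S, R x = x := by
  obtain ⟨w, hw, hw0⟩ := (Submodule.ne_bot_iff _).1 (mt S.orthogonal_eq_bot_iff.1 hS)
  refine ⟨(ℝ ∙ w)ᗮ.reflection, ?_, fun x hx => ?_⟩
  · rw [Submodule.det_reflection, Submodule.orthogonal_orthogonal, finrank_span_singleton hw0,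
      pow_one]
  · refine Submodule.reflection_mem_subspace_eq_self ?_
    rw [Submodule.mem_orthogonal_singleton_iff_inner_right]
    exact Submodule.inner_left_of_mem_orthogonal hx hw

theorem LinearIsometryEquiv.exists_det_eq_one_of_ne_top (L : E ≃ₗᵢ[ℝ] E) {S : Submodule ℝ E}
    (hS : S ≠ ⊤) :
    ∃ L' : E ≃ₗᵢ[ℝ] E, LinearMap.det L'.toLinearMap = 1 ∧ ∀ x, L x ∈ S → L' x = L x := by
  rcases L.det_eq_one_or_neg_one with hL | hL
  · exact ⟨L, hL, fun _ _ => rfl⟩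
  obtain ⟨R, hR, hRS⟩ := S.exists_linearIsometryEquiv_det_eq_neg_one hS
  refine ⟨L.trans R, ?_, fun x hx => hRS _ hx⟩
  change LinearMap.det (R.toLinearMap ∘ₗ L.toLinearMap) = 1
  rw [LinearMap.det_comp, hR, hL, neg_one_mul, neg_neg]

theorem Congruent.exists_linearIsometryEquiv {y z : ι → E} (h : Congruent y z) :
    ∃ (L : E ≃ₗᵢ[ℝ] E) (x₀ : E),
      (Fintype.card ι ≤ finrank ℝ E → LinearMap.det L.toLinearMap = 1) ∧
        ∀ i, z i = L (y i) + x₀ := by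
  rcases isEmpty_or_nonempty ι with hι | hι
  · exact ⟨LinearIsometryEquiv.refl ℝ E, 0, fun _ => LinearMap.det_id, isEmptyElim⟩
  obtain ⟨i₀⟩ := id hι
  have hinner (i j : ι) :
      inner ℝ (y i - y i₀) (y j - y i₀) = inner ℝ (z i - z i₀) (z j - z i₀) := by
    simp only [real_inner_eq_norm_mul_self_add_norm_mul_self_sub_norm_sub_mul_self_div_two,
      sub_sub_sub_cancel_right, ← dist_eq_norm, congruent_iff_dist_eq.1 h]
  obtain ⟨L, hL⟩ := exists_linearIsometryEquiv_of_inner_eq hinner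
  suffices ∃ L' : E ≃ₗᵢ[ℝ] E, (Fintype.card ι ≤ finrank ℝ E → LinearMap.det L'.toLinearMap = 1) ∧
      ∀ i, L' (y i - y i₀) = z i - z i₀ by
    obtain ⟨L', hdet, hL'⟩ := this
    refine ⟨L', z i₀ - L' (y i₀), hdet, fun i => ?_⟩
    rw [← sub_eq_iff_eq_add', sub_eq_sub_iff_sub_eq_sub, ← hL', map_sub]
  by_cases hcard : Fintype.card ι ≤ finrank ℝ E
  · have hS : vectorSpan ℝ (range z) ≠ ⊤ := fun htop => by
      have := finrank_vectorSpan_range_add_one_le ℝ z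
      rw [htop, finrank_top] at this
      omega
    obtain ⟨L', hdet, hL'⟩ := L.exists_det_eq_one_of_ne_top hS
    refine ⟨L', fun _ => hdet, fun i => ?_⟩
    rw [hL' _ ((hL i).symm ▸ vsub_mem_vectorSpan ℝ ⟨i, rfl⟩ ⟨i₀, rfl⟩), hL]
  · exact ⟨L, fun h => absurd h hcard, hL⟩

theorem Congruent.alignedWithin_zero {y z : ι → E} (h : Congruent y z) : AlignedWithin 0 y z := by
  obtain ⟨L, x₀, hdet, hL⟩ := h.exists_linearIsometryEquiv
  exact ⟨L, x₀, hdet, fun i => by rw [hL, dist_self]⟩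

theorem IsCompact.exists_forall_alignedWithin {K : Set E} (hK : IsCompact K) {ε : ℝ}
    (hε : 0 < ε) :
    ∃ δ > 0, ∀ y z : ι → E, (∀ i, y i ∈ K) → (∀ i, z i ∈ K) →
      AlmostCongruent (1 + δ) y z → AlignedWithin ε y z := by
  by_contra! h
  choose y z hy hz hyz hfar using fun n : ℕ => h (1 / (n + 1)) Nat.one_div_pos_of_nat
  have hKK : IsCompact ((univ.pi fun _ : ι => K) ×ˢ (univ.pi fun _ : ι => K)) :=
    (isCompact_univ_pi fun _ => hK).prod (isCompact_univ_pi fun _ => hK)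
  obtain ⟨⟨y₀, z₀⟩, -, φ, hφ, hlim⟩ := hKK.tendsto_subseq (x := fun n => (y n, z n))
    fun n => ⟨fun i _ => hy n i, fun i _ => hz n i⟩
  have hc : Tendsto (fun m => 1 + 1 / ((φ m : ℝ) + 1)) atTop (𝓝 1) := by
    simpa using (tendsto_one_div_add_atTop_nhds_zero_nat.comp hφ.tendsto_atTop).const_add (1 : ℝ)
  have hcongr : Congruent y₀ z₀ :=
    (almostCongruent_of_tendsto hc hlim.fst_nhds hlim.snd_nhds fun m => hyz (φ m)).congruent
  obtain ⟨N, hN⟩ := Metric.tendsto_atTop.1 hlim (ε / 2) (half_pos hε)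
  have hdist := (hN N le_rfl).le
  rw [Prod.dist_eq, max_le_iff] at hdist
  have := hcongr.alignedWithin_zero.of_dist_le (fun i => (dist_le_pi_dist _ _ i).trans hdist.1)
    (fun i => (dist_le_pi_dist _ _ i).trans hdist.2)
  exact hfar (φ N) (by rwa [add_zero, add_halves] at this)

theorem exists_forall_almostCongruent_alignedWithin {ε : ℝ} (hε : 0 < ε) :
    ∃ δ > 0, ∀ y z : ι → E, AlmostCongruent (1 + δ) y z →
      AlignedWithin (ε * diam (range y)) y z := by
  obtain ⟨δ, hδ, hK⟩ := (isCompact_closedBall (0 : E) 2).exists_forall_alignedWithin (ι := ι) hε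
  refine ⟨min δ 1, lt_min hδ one_pos, fun y z hyz => ?_⟩
  generalize hd_eq : diam (range y) = d
  have hdist (i j : ι) : dist (y i) (y j) ≤ d :=
    hd_eq ▸ dist_le_diam_of_mem (finite_range y).isBounded (mem_range_self i) (mem_range_self j)
  rcases (hd_eq ▸ diam_nonneg : 0 ≤ d).eq_or_lt with rfl | hd
  · have hcongr : Congruent y z := congruent_iff_dist_eq.2 fun i j => by
      have hy0 : dist (y i) (y j) = 0 := le_antisymm (hdist i j) dist_nonneg
      have hz0 := (hyz i j).1
      rw [hy0, mul_zero] at hz0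
      rw [hy0]
      exact (le_antisymm hz0 dist_nonneg).symm
    rw [mul_zero]
    exact hcongr.alignedWithin_zero
  obtain ⟨_, i₀, -⟩ : (range y).Nonempty :=
    nonempty_iff_ne_empty.2 fun h => by simp [h, hd.ne] at hd_eq
  have hyz' := hyz.smul_sub d⁻¹ (y i₀) (z i₀)
  have hy' (i : ι) : ‖d⁻¹ • (y i - y i₀)‖ ≤ 1 := by
    rw [norm_smul, Real.norm_of_nonneg (inv_nonneg.2 hd.le), ← dist_eq_norm, inv_mul_le_iff₀ hd,
      mul_one]
    exact hdist i i₀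
  have hz' (i : ι) : ‖d⁻¹ • (z i - z i₀)‖ ≤ 2 := by
    have := (hyz' i i₀).1
    simp only [sub_self, smul_zero, dist_zero_right] at this
    nlinarith [hy' i, min_le_right δ 1, norm_nonneg (d⁻¹ • (y i - y i₀))]
  have := (hK _ _ (fun i => mem_closedBall_zero_iff.2 ((hy' i).trans one_le_two))
    (fun i => mem_closedBall_zero_iff.2 (hz' i))
    (hyz'.mono (add_le_add_right (min_le_left δ 1) 1))).of_smul_sub (inv_pos.2 hd)
  rwa [inv_inv, mul_comm] at this

end InnerProductSpace

theorem LinearIsometryEquiv.exists_mem_orthogonalGroup_toEuclideanLin_eq {n : Type*} [Fintype n]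
    [DecidableEq n] (L : EuclideanSpace ℝ n ≃ₗᵢ[ℝ] EuclideanSpace ℝ n) :
    ∃ T ∈ Matrix.orthogonalGroup n ℝ,
      Matrix.toEuclideanLin T = L.toLinearMap ∧ T.det = LinearMap.det L.toLinearMap := by
  set b := EuclideanSpace.basisFun n ℝ
  refine ⟨LinearMap.toMatrix b.toBasis b.toBasis L.toLinearMap, L.toMatrix_mem_unitaryGroup b b,
    ?_, LinearMap.det_toMatrix _ _⟩
  rw [Matrix.toEuclideanLin_eq_toLin_orthonormal]
  exact Matrix.toLin_toMatrix _ _ _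

theorem approximate_alignment_general
    (D k : ℕ) (ε : ℝ) (hε : 0 < ε) :
    ∃ δ > 0, ∀ y z : Fin k → EuclideanSpace ℝ (Fin D),
      Function.Injective y → Function.Injective z →
      (∀ i j, i ≠ j →
        (1 + δ)⁻¹ ≤ dist (z i) (z j) / dist (y i) (y j) ∧
        dist (z i) (z j) / dist (y i) (y j) ≤ 1 + δ) →
      ∃ (T : Matrix (Fin D) (Fin D) ℝ) (x₀ : EuclideanSpace ℝ (Fin D)),
        T ∈ Matrix.orthogonalGroup (Fin D) ℝ ∧
        (∀ i, dist (z i) (Matrix.toEuclideanLin T (y i) + x₀)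
            ≤ ε * Metric.diam (Set.range y)) ∧
        (k ≤ D → T.det = 1) := by
  obtain ⟨δ, hδ, hδalign⟩ :=
    exists_forall_almostCongruent_alignedWithin (E := EuclideanSpace ℝ (Fin D)) (ι := Fin k) hε
  refine ⟨δ, hδ, fun y z hy _ hratio => ?_⟩
  obtain ⟨L, x₀, hdet, hL⟩ := hδalign y z (almostCongruent_of_dist_div (by positivity) hy hratio)
  obtain ⟨T, hT, hTL, hTdet⟩ := L.exists_mem_orthogonalGroup_toEuclideanLin_eq
  refine ⟨T, x₀, hT, fun i => ?_, fun hkD => ?_⟩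
  · rw [hTL]
    exact hL i
  · rw [hTdet]
    exact hdet (by simpa using hkD)

/-- For every `ε > 0` there is `δ > 0` such that any two k-point
configurations whose pairwise distance ratios lie in `[(1+δ)⁻¹, 1+δ]` can be aligned
to within `ε · diam{y_1,...,y_k}` by a Euclidean motion; proper if `k ≤ D`. -/
theorem approximate_alignment
    (D k : ℕ) (hD : 2 ≤ D) (hk : 1 ≤ k) (ε : ℝ) (hε : 0 < ε) :
    ∃ δ > 0, ∀ y z : Fin k → EuclideanSpace ℝ (Fin D),
      Function.Injective y → Function.Injective z →
      (∀ i j, i ≠ j →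
        (1 + δ)⁻¹ ≤ dist (z i) (z j) / dist (y i) (y j) ∧
        dist (z i) (z j) / dist (y i) (y j) ≤ 1 + δ) →
      ∃ (T : Matrix (Fin D) (Fin D) ℝ) (x₀ : EuclideanSpace ℝ (Fin D)),
        T ∈ Matrix.orthogonalGroup (Fin D) ℝ ∧
        (∀ i, dist (z i) (Matrix.toEuclideanLin T (y i) + x₀)
            ≤ ε * Metric.diam (Set.range y)) ∧
        (k ≤ D → T.det = 1) :=
  approximate_alignment_general D k ε hε
end

section
/- Let D ≥ 2, let k ≥ 2 be an integer, and let 0 < η ≤ 1/10. Let E ⊂ ℝ^D be a set consisting of k distinct points. Then E can be partitioned into nonempty sets E_1, E_2,...,E_{μmax} and there exists a positive integer l with 10 ≤ l ≤ 100 + k(k−1)/2 such that diam(E_μ) ≤ η^l · diam(E) for each μ, and dist(E_μ, E_{μ'}) ≥ η^{l−1} · diam(E) for all μ ≠ μ'. -/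
/-!
Put `d = diam E`. The windows `(η^l d, η^(l-1) d)` for `l ∈ [10, 100 + C(k,2)]` are `91 + C(k,2)`
pairwise disjoint intervals, while the points of `E` realise at most `C(k,2)` nonzero distances,
so for some `l` no distance in `E` falls in its window. With `t = η^l d` we have
`2t < η^(l-1) d`, so being at distance `≤ t` is transitive on `E`; its classes are the clusters.
Each has diameter `≤ t`, and points of different classes are at distance `> t`, hence
`≥ η^(l-1) d`.
-/

open Finset Function

theorem Finset.exists_forall_notMem_of_card_lt_of_pairwiseDisjoint {ι β : Type*}
    {I : Finset ι} {V : Finset β} {W : ι → Set β} (hW : (I : Set ι).PairwiseDisjoint W)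
    (hcard : #V < #I) : ∃ i ∈ I, ∀ v ∈ V, v ∉ W i := by
  by_contra! h
  refine hcard.not_ge (card_le_card_of_forall_subsingleton (fun i v ↦ v ∈ W i) h ?_)
  rintro v - i ⟨hi, hvi⟩ j ⟨hj, hvj⟩
  by_contra hij
  exact Set.disjoint_left.mp (hW hi hj hij) hvi hvj

theorem pairwise_disjoint_Ioo_pow_mul {η d : ℝ} (hη₀ : 0 ≤ η) (hη₁ : η ≤ 1) (hd : 0 ≤ d) :
    Pairwise (Disjoint on fun l : ℕ ↦ Set.Ioo (η ^ l * d) (η ^ (l - 1) * d)) := by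
  refine (pairwise_disjoint_on _).2 fun l l' hll' ↦ Set.Ioo_disjoint_Ioo.2 ?_
  have : η ^ (l' - 1) ≤ η ^ l := pow_le_pow_of_le_one hη₀ hη₁ (by omega)
  exact (min_le_right _ _).trans ((mul_le_mul_of_nonneg_right this hd).trans (le_max_left _ _))

theorem card_image_dist_offDiag_le {α : Type*} [PseudoMetricSpace α] [DecidableEq α]
    (E : Finset α) :
    #((E.offDiag.image Sym2.mk.uncurry).image (Sym2.lift ⟨dist, dist_comm⟩)) ≤ (#E).choose 2 :=
  Sym2.card_image_offDiag E ▸ card_image_le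

theorem exists_scale_forall_dist_notMem_Ioo {α : Type*} [PseudoMetricSpace α] (E : Finset α)
    {η d : ℝ} (hη₀ : 0 ≤ η) (hη₁ : η ≤ 1) (hd : 0 ≤ d) {a b : ℕ}
    (hcard : (#E).choose 2 < b + 1 - a) :
    ∃ l ∈ Icc a b, ∀ x ∈ E, ∀ y ∈ E, dist x y ∉ Set.Ioo (η ^ l * d) (η ^ (l - 1) * d) := by
  classical
  obtain ⟨l, hl, hV⟩ := exists_forall_notMem_of_card_lt_of_pairwiseDisjoint
    ((pairwise_disjoint_Ioo_pow_mul hη₀ hη₁ hd).set_pairwise (Icc a b : Set ℕ))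
    ((card_image_dist_offDiag_le E).trans_lt (Nat.card_Icc a b ▸ hcard))
  refine ⟨l, hl, fun x hx y hy ↦ ?_⟩
  by_cases hxy : x = y
  · subst hxy
    rw [dist_self]
    exact fun h ↦ h.1.not_ge (mul_nonneg (pow_nonneg hη₀ l) hd)
  · exact hV _ (mem_image.2 ⟨s(x, y), mem_image_of_mem _ (mem_offDiag.2 ⟨hx, hy, hxy⟩), rfl⟩)

theorem two_mul_pow_mul_lt_pow_pred_mul {η d : ℝ} (hη₀ : 0 < η) (hη : η < 1 / 2) (hd : 0 < d)
    {l : ℕ} (hl : 1 ≤ l) : 2 * (η ^ l * d) < η ^ (l - 1) * d := by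
  obtain ⟨m, rfl⟩ : ∃ m, l = m + 1 := ⟨l - 1, by omega⟩
  have : 0 < η ^ m * d := by positivity
  rw [Nat.add_sub_cancel, pow_succ]
  nlinarith

theorem Finset.exists_finpartition_of_dist_gap {α : Type*} [PseudoMetricSpace α] [DecidableEq α]
    (E : Finset α) {t s : ℝ} (ht : 0 ≤ t) (hts : 2 * t < s)
    (hgap : ∀ x ∈ E, ∀ y ∈ E, dist x y ∉ Set.Ioo t s) :
    ∃ P : Finpartition E, (∀ p ∈ P.parts, Metric.diam (p : Set α) ≤ t) ∧
      ∀ p ∈ P.parts, ∀ q ∈ P.parts, p ≠ q → ∀ x ∈ p, ∀ y ∈ q, s ≤ dist x y := by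
  classical
  -- `x ~ y` iff `x` and `y` have the same `t`-neighbours in `E`; on `E` this is `dist x y ≤ t`.
  let r := Setoid.ker fun x ↦ {c ∈ E | dist x c ≤ t}
  let P := Finpartition.ofSetSetoid r E
  have dist_le_of_mem_part {x y : α} (hy : y ∈ P.part x) : dist x y ≤ t := by
    obtain ⟨-, hyE, hxy⟩ := (Finpartition.mem_part_ofSetSetoid_iff_rel E).1 hy
    have : y ∈ {c ∈ E | dist y c ≤ t} := mem_filter.2 ⟨hyE, by simpa using ht⟩
    rw [← Setoid.ker_def.1 hxy] at this
    exact (mem_filter.1 this).2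
  have mem_part_of_dist_le {x y : α} (hx : x ∈ E) (hy : y ∈ E) (hxy : dist x y ≤ t) :
      y ∈ P.part x := by
    refine (Finpartition.mem_part_ofSetSetoid_iff_rel E).2 ⟨hx, hy, Setoid.ker_def.2 ?_⟩
    ext c
    simp only [mem_filter, and_congr_right_iff]
    intro hc
    constructor <;> intro h <;> refine not_lt.1 fun hlt ↦ hgap _ ‹_› c hc ⟨hlt, ?_⟩
    · linarith [dist_triangle y x c, dist_comm x y]
    · linarith [dist_triangle x y c]
  refine ⟨P, fun p hp ↦ Metric.diam_le_of_forall_dist_le ht fun x hx y hy ↦ ?_,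
    fun p hp q hq hpq x hx y hy ↦ ?_⟩
  · exact dist_le_of_mem_part (P.part_eq_of_mem hp hx ▸ hy)
  · have hxE := P.subset hp hx
    have hyE := P.subset hq hy
    refine not_lt.1 fun hlt ↦ hpq (P.eq_of_mem_parts hp hq ?_ hy)
    rw [← P.part_eq_of_mem hp hx]
    exact mem_part_of_dist_le hxE hyE (not_lt.1 fun h ↦ hgap x hxE y hyE ⟨h, hlt⟩)

theorem Finpartition.exists_fin_enumeration {α : Type*} [DecidableEq α] {s : Finset α}
    (P : Finpartition s) :
    ∃ (n : ℕ) (Es : Fin n → Finset α), (∀ μ, Es μ ∈ P.parts) ∧ Injective Es ∧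
      ∀ x, x ∈ s ↔ ∃ μ, x ∈ Es μ := by
  let e := P.parts.equivFin
  refine ⟨_, fun μ ↦ e.symm μ, fun μ ↦ (e.symm μ).2,
    Subtype.val_injective.comp e.symm.injective, fun x ↦ ⟨fun hx ↦ ?_, ?_⟩⟩
  · obtain ⟨p, hp, hxp⟩ := P.exists_mem hx
    exact ⟨e ⟨p, hp⟩, by simpa using hxp⟩
  · rintro ⟨μ, hx⟩
    exact P.subset (e.symm μ).2 hx

theorem clustering_partition_general
    (D k : ℕ) (hk : 2 ≤ k) (η : ℝ) (hη₁ : 0 < η) (hη₂ : η ≤ 1 / 10)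
    (E : Finset (EuclideanSpace ℝ (Fin D))) (hcard : E.card = k) :
    ∃ (μmax : ℕ) (Es : Fin μmax → Finset (EuclideanSpace ℝ (Fin D))) (l : ℕ),
      10 ≤ l ∧ l ≤ 100 + Nat.choose k 2 ∧
      (∀ μ, (Es μ).Nonempty) ∧
      (∀ μ μ', μ ≠ μ' → Disjoint (Es μ) (Es μ')) ∧
      (∀ x, x ∈ E ↔ ∃ μ, x ∈ Es μ) ∧
      (∀ μ, Metric.diam (Es μ : Set (EuclideanSpace ℝ (Fin D)))
          ≤ η ^ l * Metric.diam (E : Set (EuclideanSpace ℝ (Fin D)))) ∧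
      (∀ μ μ', μ ≠ μ' → ∀ x ∈ Es μ, ∀ x' ∈ Es μ',
        η ^ (l - 1) * Metric.diam (E : Set (EuclideanSpace ℝ (Fin D))) ≤ dist x x') := by
  classical
  subst hcard
  set d := Metric.diam (E : Set (EuclideanSpace ℝ (Fin D)))
  have hd : 0 < d :=
    Metric.diam_pos (one_lt_card_iff_nontrivial.1 (by omega)) E.finite_toSet.isBounded
  obtain ⟨l, hl, hgap⟩ := exists_scale_forall_dist_notMem_Ioo E hη₁.le (by linarith) hd.le
    (a := 10) (b := 100 + (#E).choose 2) (by omega)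
  obtain ⟨hl₁, hl₂⟩ := mem_Icc.1 hl
  obtain ⟨P, hdiam, hsep⟩ := E.exists_finpartition_of_dist_gap (by positivity)
    (two_mul_pow_mul_lt_pow_pred_mul hη₁ (by linarith) hd (by omega : 1 ≤ l)) hgap
  obtain ⟨n, Es, hparts, hinj, hcover⟩ := P.exists_fin_enumeration
  exact ⟨n, Es, l, hl₁, hl₂, fun μ ↦ P.nonempty_of_mem_parts (hparts μ),
    fun μ μ' h ↦ P.disjoint (hparts μ) (hparts μ') (hinj.ne h), hcover,
    fun μ ↦ hdiam _ (hparts μ), fun μ μ' h ↦ hsep _ (hparts μ) _ (hparts μ') (hinj.ne h)⟩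

/-- Clustering lemma. A set of `k ≥ 2` distinct points in `ℝ^D` can be
partitioned into nonempty clusters `E_1,...,E_{μmax}`, with an integer
`10 ≤ l ≤ 100 + C(k,2)`, so that each cluster has diameter `≤ η^l diam E` and distinct
clusters are at distance `≥ η^{l-1} diam E`. -/
theorem clustering_partition
    (D k : ℕ) (hD : 2 ≤ D) (hk : 2 ≤ k) (η : ℝ) (hη₁ : 0 < η) (hη₂ : η ≤ 1 / 10)
    (E : Finset (EuclideanSpace ℝ (Fin D))) (hcard : E.card = k) :
    ∃ (μmax : ℕ) (Es : Fin μmax → Finset (EuclideanSpace ℝ (Fin D))) (l : ℕ),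
      10 ≤ l ∧ l ≤ 100 + Nat.choose k 2 ∧
      (∀ μ, (Es μ).Nonempty) ∧
      (∀ μ μ', μ ≠ μ' → Disjoint (Es μ) (Es μ')) ∧
      (∀ x, x ∈ E ↔ ∃ μ, x ∈ Es μ) ∧
      (∀ μ, Metric.diam (Es μ : Set (EuclideanSpace ℝ (Fin D)))
          ≤ η ^ l * Metric.diam (E : Set (EuclideanSpace ℝ (Fin D)))) ∧
      (∀ μ μ', μ ≠ μ' → ∀ x ∈ Es μ, ∀ x' ∈ Es μ',
        η ^ (l - 1) * Metric.diam (E : Set (EuclideanSpace ℝ (Fin D))) ≤ dist x x') :=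
  clustering_partition_general D k hk η hη₁ hη₂ E hcard
end
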